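/- Let μ and ν be probability measures on ℝ^d both satisfying the tail bound P(‖X‖ ≥ z) ≤ e^{−z/C + 1} for z ≥ C, where C > 0. Then for any R ≥ C, W₂²(μ, ν) ≤ 4R² ‖μ − ν‖_TV + 8(R² + RC + C²) e^{−R/C + 1}. -/

import Mathlib

/-!
Keep the common part of `μ` and `ν` (read off a Hahn decomposition) on the diagonal and couple
the two remainders, each of mass at most `‖μ - ν‖_TV`, independently. Off the diagonal
`‖x - y‖² ≤ 4R² + h x + h y` with `h z = 2‖z‖² 𝟙{‖z‖ ≥ R}`, and the layer-cake formula together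
with the exponential tail gives `∫_{‖z‖ ≥ R} ‖z‖² ≤ 2 (R² + RC + C²) e^{-R/C+1}` for both measures.
-/

open MeasureTheory

/-- Total variation distance between two measures: supremum over measurable sets. -/
noncomputable def tvDist {α : Type*} [MeasurableSpace α] (μ ν : Measure α) : ℝ :=
  ⨆ S : {S : Set α // MeasurableSet S}, |(μ S.1).toReal - (ν S.1).toReal|

/-- Squared 2-Wasserstein distance: infimum over couplings of the expected squared distance. -/
noncomputable def W2sq {α : Type*} [MeasurableSpace α] [NormedAddCommGroup α]
    (μ ν : Measure α) : ℝ :=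
  sInf {c : ℝ | ∃ γ : Measure (α × α), γ.map Prod.fst = μ ∧ γ.map Prod.snd = ν ∧
    c = ∫ p, ‖p.1 - p.2‖ ^ 2 ∂γ}

open Set Filter Topology
open scoped ENNReal

section Coupling

variable {α : Type*} [MeasurableSpace α]

theorem tvDist_nonneg (μ ν : Measure α) : 0 ≤ tvDist μ ν :=
  Real.iSup_nonneg fun _ => abs_nonneg _

theorem toReal_sub_toReal_le_tvDist (μ ν : Measure α) [IsFiniteMeasure μ] [IsFiniteMeasure ν]
    {s : Set α} (hs : MeasurableSet s) : (μ s).toReal - (ν s).toReal ≤ tvDist μ ν := by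
  have hbdd : BddAbove (range fun t : {t : Set α // MeasurableSet t} =>
      |(μ t.1).toReal - (ν t.1).toReal|) := by
    refine ⟨(μ univ).toReal + (ν univ).toReal, ?_⟩
    rintro _ ⟨t, rfl⟩
    have hμ := ENNReal.toReal_mono (measure_ne_top μ univ) (measure_mono (subset_univ t.1) (μ := μ))
    have hν := ENNReal.toReal_mono (measure_ne_top ν univ) (measure_mono (subset_univ t.1) (μ := ν))
    rw [abs_le]
    constructor <;> linarith [(μ t.1).toReal_nonneg, (ν t.1).toReal_nonneg]
  exact (le_abs_self _).trans (le_ciSup hbdd ⟨s, hs⟩)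

theorem exists_add_eq_add_eq_measure_univ_le_tvDist (μ ν : Measure α)
    [IsFiniteMeasure μ] [IsFiniteMeasure ν] :
    ∃ m μ' ν' : Measure α, m + μ' = μ ∧ m + ν' = ν ∧ μ' univ ≤ ENNReal.ofReal (tvDist μ ν) := by
  obtain ⟨s, hs, hνμ, hμν⟩ := hahn_decomposition μ ν
  have hle : ν.restrict s ≤ μ.restrict s := Measure.le_iff.2 fun t ht => by
    rw [Measure.restrict_apply ht, Measure.restrict_apply ht]
    exact hνμ _ (ht.inter hs) inter_subset_right
  have hle' : μ.restrict sᶜ ≤ ν.restrict sᶜ := Measure.le_iff.2 fun t ht => by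
    rw [Measure.restrict_apply ht, Measure.restrict_apply ht]
    exact hμν _ (ht.inter hs.compl) inter_subset_right
  refine ⟨ν.restrict s + μ.restrict sᶜ, μ.restrict s - ν.restrict s,
    ν.restrict sᶜ - μ.restrict sᶜ, ?_, ?_, ?_⟩
  · rw [add_right_comm, add_comm (ν.restrict s), Measure.sub_add_cancel_of_le hle,
      Measure.restrict_add_restrict_compl hs]
  · rw [add_assoc, add_comm (μ.restrict sᶜ), Measure.sub_add_cancel_of_le hle',
      Measure.restrict_add_restrict_compl hs]
  · rw [Measure.sub_apply MeasurableSet.univ hle, Measure.restrict_apply_univ,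
      Measure.restrict_apply_univ, ENNReal.le_ofReal_iff_toReal_le (by finiteness)
      (tvDist_nonneg μ ν), ENNReal.toReal_sub_of_le (hνμ s hs subset_rfl) (measure_ne_top μ s)]
    exact toReal_sub_toReal_le_tvDist μ ν hs

theorem exists_map_fst_eq_map_snd_eq_of_measure_univ_eq {β : Type*} [MeasurableSpace β]
    (μ : Measure α) (ν : Measure β) [IsFiniteMeasure μ] [IsFiniteMeasure ν]
    (h : μ univ = ν univ) : ∃ π : Measure (α × β), π.map Prod.fst = μ ∧ π.map Prod.snd = ν := by
  rcases eq_or_ne (μ univ) 0 with h0 | h0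
  · have hμ : μ = 0 := Measure.measure_univ_eq_zero.1 h0
    have hν : ν = 0 := Measure.measure_univ_eq_zero.1 (h ▸ h0)
    exact ⟨0, by simp [hμ], by simp [hν]⟩
  refine ⟨(μ univ)⁻¹ • μ.prod ν, ?_, ?_⟩
  · rw [Measure.map_smul, Measure.map_fst_prod, smul_smul, ← h,
      ENNReal.inv_mul_cancel h0 (measure_ne_top _ _), one_smul]
  · rw [Measure.map_smul, Measure.map_snd_prod, smul_smul,
      ENNReal.inv_mul_cancel h0 (measure_ne_top _ _), one_smul]

theorem lintegral_le_of_map_fst_of_map_snd {π : Measure (α × α)} {μ ν : Measure α}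
    (hπμ : π.map Prod.fst = μ) (hπν : π.map Prod.snd = ν) {c : α × α → ℝ≥0∞} {h : α → ℝ≥0∞}
    {K : ℝ≥0∞} (hh : Measurable h) (hc : ∀ x y, c (x, y) ≤ K + h x + h y) :
    ∫⁻ p, c p ∂π ≤ K * μ univ + ∫⁻ x, h x ∂μ + ∫⁻ x, h x ∂ν := by
  have hmass : π univ = μ univ := by
    rw [← hπμ, Measure.map_apply measurable_fst MeasurableSet.univ, preimage_univ]
  calc ∫⁻ p, c p ∂π ≤ ∫⁻ p, K + (h ∘ Prod.fst) p + (h ∘ Prod.snd) p ∂π :=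
        lintegral_mono fun p => hc p.1 p.2
    _ = K * μ univ + ∫⁻ x, h x ∂μ + ∫⁻ x, h x ∂ν := by
      rw [lintegral_add_right _ (hh.comp measurable_snd), lintegral_add_left measurable_const,
        lintegral_const, hmass, ← hπμ, ← hπν, lintegral_map hh measurable_fst,
        lintegral_map hh measurable_snd]
      rfl

theorem exists_coupling_lintegral_le (μ ν : Measure α) [IsProbabilityMeasure μ]
    [IsProbabilityMeasure ν] {c : α × α → ℝ≥0∞} {h : α → ℝ≥0∞} {K : ℝ≥0∞} (hh : Measurable h)
    (hc_diag : ∀ x, c (x, x) = 0) (hc : ∀ x y, c (x, y) ≤ K + h x + h y) :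
    ∃ γ : Measure (α × α), γ.map Prod.fst = μ ∧ γ.map Prod.snd = ν ∧
      ∫⁻ p, c p ∂γ ≤ K * ENNReal.ofReal (tvDist μ ν) + ∫⁻ x, h x ∂μ + ∫⁻ x, h x ∂ν := by
  obtain ⟨m, μ', ν', hμ, hν, hμ'⟩ := exists_add_eq_add_eq_measure_univ_le_tvDist μ ν
  have hμ'μ : μ' ≤ μ := hμ ▸ Measure.le_add_left le_rfl
  have hν'ν : ν' ≤ ν := hν ▸ Measure.le_add_left le_rfl
  have : IsFiniteMeasure m := isFiniteMeasure_of_le μ (hμ ▸ Measure.le_add_right le_rfl)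
  have : IsFiniteMeasure μ' := isFiniteMeasure_of_le μ hμ'μ
  have : IsFiniteMeasure ν' := isFiniteMeasure_of_le ν hν'ν
  have hmass : μ' univ = ν' univ := by
    refine (ENNReal.add_right_inj (measure_ne_top m univ)).1 ?_
    rw [← Measure.add_apply, ← Measure.add_apply, hμ, hν, measure_univ, measure_univ]
  obtain ⟨π, hπμ, hπν⟩ := exists_map_fst_eq_map_snd_eq_of_measure_univ_eq μ' ν' hmass
  have hdiag : Measurable fun x : α => (x, x) := measurable_id.prodMk measurable_id
  refine ⟨m.map (fun x => (x, x)) + π, ?_, ?_, ?_⟩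
  · rw [Measure.map_add _ _ measurable_fst, Measure.map_map measurable_fst hdiag, hπμ]
    exact (congrArg (· + μ') m.map_id).trans hμ
  · rw [Measure.map_add _ _ measurable_snd, Measure.map_map measurable_snd hdiag, hπν]
    exact (congrArg (· + ν') m.map_id).trans hν
  calc ∫⁻ p, c p ∂(m.map (fun x => (x, x)) + π)
      = ∫⁻ p, c p ∂(m.map (fun x => (x, x))) + ∫⁻ p, c p ∂π := lintegral_add_measure _ _ _
    _ ≤ 0 + (K * μ' univ + ∫⁻ x, h x ∂μ' + ∫⁻ x, h x ∂ν') := by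
      gcongr
      · exact (lintegral_map_le _ _).trans_eq (by simp [hc_diag])
      · exact lintegral_le_of_map_fst_of_map_snd hπμ hπν hh hc
    _ ≤ K * ENNReal.ofReal (tvDist μ ν) + ∫⁻ x, h x ∂μ + ∫⁻ x, h x ∂ν := by
      rw [zero_add]
      gcongr

end Coupling

theorem W2sq_le_of_lintegral_le {α : Type*} [MeasurableSpace α] [NormedAddCommGroup α]
    {μ ν : Measure α} {γ : Measure (α × α)} (hγμ : γ.map Prod.fst = μ)
    (hγν : γ.map Prod.snd = ν) {B : ℝ} (hB : 0 ≤ B)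
    (hγ : ∫⁻ p, ENNReal.ofReal (‖p.1 - p.2‖ ^ 2) ∂γ ≤ ENNReal.ofReal B) : W2sq μ ν ≤ B := by
  have hbdd : BddBelow {c : ℝ | ∃ γ : Measure (α × α), γ.map Prod.fst = μ ∧
      γ.map Prod.snd = ν ∧ c = ∫ p, ‖p.1 - p.2‖ ^ 2 ∂γ} :=
    ⟨0, by rintro _ ⟨γ, -, -, rfl⟩; exact integral_nonneg fun p => by positivity⟩
  refine (csInf_le hbdd ⟨γ, hγμ, hγν, rfl⟩).trans ?_
  have hcost : ‖∫ p, ‖p.1 - p.2‖ ^ 2 ∂γ‖ₑ ≤ ENNReal.ofReal B := by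
    refine (enorm_integral_le_lintegral_enorm _).trans (le_of_eq_of_le ?_ hγ)
    exact lintegral_congr fun p => Real.enorm_of_nonneg (by positivity)
  rw [Real.enorm_eq_ofReal_abs, ENNReal.ofReal_le_ofReal_iff hB] at hcost
  exact (le_abs_self _).trans hcost

section ExponentialTail

open Real

variable {C : ℝ}

theorem hasDerivAt_mul_exp_neg_div (hC : C ≠ 0) (t : ℝ) :
    HasDerivAt (fun t => -(C * ((t + C) * exp (-t / C + 1)))) (t * exp (-t / C + 1)) t := by
  have hlin : HasDerivAt (fun t : ℝ => -t / C + 1) (-1 / C) t :=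
    ((hasDerivAt_id t).neg.div_const C).add_const 1
  refine ((((hasDerivAt_id' t).add_const C).mul hlin.exp).const_mul C).neg.congr_deriv ?_
  field_simp
  ring

theorem tendsto_mul_exp_neg_div (hC : 0 < C) :
    Tendsto (fun t => -(C * ((t + C) * exp (-t / C + 1)))) atTop (𝓝 0) := by
  have hu : Tendsto (fun u : ℝ => u ^ 1 * exp (-u) + u ^ 0 * exp (-u)) atTop (𝓝 0) := by
    simpa using (tendsto_pow_mul_exp_neg_atTop_nhds_zero 1).add
      (tendsto_pow_mul_exp_neg_atTop_nhds_zero 0)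
  convert ((hu.comp (tendsto_id.atTop_div_const hC)).const_mul (-(C * C * exp 1))) using 1
  · ext t
    simp only [Function.comp_apply, id, pow_one, pow_zero, one_mul]
    rw [neg_div, exp_add]
    field_simp
  · simp

theorem integral_Ioi_mul_exp_neg_div (hC : 0 < C) {R : ℝ} (hR : 0 ≤ R) :
    ∫ t in Ioi R, t * exp (-t / C + 1) = C * (R + C) * exp (-R / C + 1) := by
  rw [integral_Ioi_of_hasDerivAt_of_nonneg' (fun t _ => hasDerivAt_mul_exp_neg_div hC.ne' t)
    (fun t ht => by have : 0 < t := hR.trans_lt ht; positivity) (tendsto_mul_exp_neg_div hC)]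
  ring

theorem integrableOn_Ioi_mul_exp_neg_div (hC : 0 < C) {R : ℝ} (hR : 0 ≤ R) :
    IntegrableOn (fun t => t * exp (-t / C + 1)) (Ioi R) :=
  integrableOn_Ioi_deriv_of_nonneg' (fun t _ => hasDerivAt_mul_exp_neg_div hC.ne' t)
    (fun t ht => by have : 0 < t := hR.trans_lt ht; positivity) (tendsto_mul_exp_neg_div hC)

/-- Layer cake for `f²` on `{R ≤ f}`: there the tail of `f` is at most `μ {R ≤ f}` below level `R`
and the exponential tail above it. -/
theorem setLIntegral_sq_le_of_tail_le_exp {α : Type*} [MeasurableSpace α] (μ : Measure α)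
    {f : α → ℝ} (hf : Measurable f) {R : ℝ} (hC : 0 < C) (hR : C ≤ R)
    (htail : ∀ z, C ≤ z → μ {x | z ≤ f x} ≤ ENNReal.ofReal (exp (-z / C + 1))) :
    ∫⁻ x in {x | R ≤ f x}, ENNReal.ofReal (f x ^ 2) ∂μ
      ≤ ENNReal.ofReal (2 * (R ^ 2 + R * C + C ^ 2) * exp (-R / C + 1)) := by
  have hR0 : 0 < R := hC.trans_le hR
  set A := {x | R ≤ f x}
  have hA : MeasurableSet A := measurableSet_le measurable_const hf
  set E := exp (-R / C + 1)
  set tail : ℝ → ℝ≥0∞ := fun t => μ.restrict A {x | t ≤ f x} * ENNReal.ofReal (t ^ ((2 : ℝ) - 1))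
  have hlayer :
      ∫⁻ x in A, ENNReal.ofReal (f x ^ 2) ∂μ = ENNReal.ofReal 2 * ∫⁻ t in Ioi 0, tail t := by
    simp_rw [← Real.rpow_two]
    exact lintegral_rpow_eq_lintegral_meas_le_mul _
      ((ae_restrict_mem hA).mono fun x hx => hR0.le.trans hx) hf.aemeasurable two_pos
  have hlow : ∫⁻ t in Ioc 0 R, tail t ≤ ENNReal.ofReal (E * R * R) := by
    calc ∫⁻ t in Ioc 0 R, tail t ≤ ∫⁻ t in Ioc 0 R, ENNReal.ofReal (E * R) := by
          refine setLIntegral_mono measurable_const fun t ht => ?_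
          rw [ENNReal.ofReal_mul (exp_nonneg _)]
          refine mul_le_mul' ?_ ?_
          · exact ((measure_mono (subset_univ _)).trans_eq (Measure.restrict_apply_univ A)).trans
              (htail R hR)
          · norm_num
            exact ENNReal.ofReal_le_ofReal ht.2
      _ = ENNReal.ofReal (E * R * R) := by
          rw [setLIntegral_const, Real.volume_Ioc, sub_zero, ← ENNReal.ofReal_mul (by positivity)]
  have hhigh : ∫⁻ t in Ioi R, tail t ≤ ENNReal.ofReal (C * (R + C) * E) := by
    calc ∫⁻ t in Ioi R, tail t ≤ ∫⁻ t in Ioi R, ENNReal.ofReal (t * exp (-t / C + 1)) := by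
          refine setLIntegral_mono (by fun_prop) fun t ht => ?_
          rw [mul_comm t, ENNReal.ofReal_mul (exp_nonneg _)]
          refine mul_le_mul' ?_ ?_
          · exact (Measure.restrict_le_self _).trans (htail t (hR.trans ht.out.le))
          · norm_num
      _ = ENNReal.ofReal (C * (R + C) * E) := by
          rw [← ofReal_integral_eq_lintegral_ofReal (integrableOn_Ioi_mul_exp_neg_div hC hR0.le)
            ((ae_restrict_mem measurableSet_Ioi).mono fun t ht =>
              by have : 0 < t := hR0.trans ht; positivity),
            integral_Ioi_mul_exp_neg_div hC hR0.le]
  calc ∫⁻ x in A, ENNReal.ofReal (f x ^ 2) ∂μ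
      = ENNReal.ofReal 2 * ((∫⁻ t in Ioc 0 R, tail t) + ∫⁻ t in Ioi R, tail t) := by
        rw [hlayer, ← Ioc_union_Ioi_eq_Ioi hR0.le,
          lintegral_union measurableSet_Ioi (Ioc_disjoint_Ioi le_rfl)]
    _ ≤ ENNReal.ofReal 2 * (ENNReal.ofReal (E * R * R) + ENNReal.ofReal (C * (R + C) * E)) := by
        gcongr ENNReal.ofReal 2 * (?_ + ?_)
    _ = ENNReal.ofReal (2 * (R ^ 2 + R * C + C ^ 2) * E) := by
        rw [← ENNReal.ofReal_add (by positivity) (by positivity),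
          ← ENNReal.ofReal_mul zero_le_two]
        ring_nf

theorem lintegral_indicator_two_mul_sq_le_of_tail_le_exp {α : Type*} [MeasurableSpace α]
    (μ : Measure α) {f : α → ℝ} (hf : Measurable f) {R : ℝ} (hC : 0 < C) (hR : C ≤ R)
    (htail : ∀ z, C ≤ z → μ {x | z ≤ f x} ≤ ENNReal.ofReal (exp (-z / C + 1))) :
    ∫⁻ x, {x | R ≤ f x}.indicator (fun x => ENNReal.ofReal (2 * f x ^ 2)) x ∂μ
      ≤ ENNReal.ofReal (4 * (R ^ 2 + R * C + C ^ 2) * exp (-R / C + 1)) := by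
  simp_rw [lintegral_indicator (measurableSet_le measurable_const hf),
    ENNReal.ofReal_mul zero_le_two]
  rw [lintegral_const_mul _ (by fun_prop)]
  calc ENNReal.ofReal 2 * ∫⁻ x in {x | R ≤ f x}, ENNReal.ofReal (f x ^ 2) ∂μ
      ≤ ENNReal.ofReal 2 * ENNReal.ofReal (2 * (R ^ 2 + R * C + C ^ 2) * exp (-R / C + 1)) := by
        gcongr
        exact setLIntegral_sq_le_of_tail_le_exp μ hf hC hR htail
    _ = ENNReal.ofReal (4 * (R ^ 2 + R * C + C ^ 2) * exp (-R / C + 1)) := by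
        rw [← ENNReal.ofReal_mul zero_le_two]
        ring_nf

end ExponentialTail

theorem ofReal_norm_sub_sq_le {E : Type*} [SeminormedAddCommGroup E] (R : ℝ) (x y : E) :
    ENNReal.ofReal (‖x - y‖ ^ 2) ≤ ENNReal.ofReal (4 * R ^ 2)
      + {z | R ≤ ‖z‖}.indicator (fun z => ENNReal.ofReal (2 * ‖z‖ ^ 2)) x
      + {z | R ≤ ‖z‖}.indicator (fun z => ENNReal.ofReal (2 * ‖z‖ ^ 2)) y := by
  have hsplit (z : E) : ENNReal.ofReal (2 * ‖z‖ ^ 2) ≤ ENNReal.ofReal (2 * R ^ 2)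
      + {z | R ≤ ‖z‖}.indicator (fun z => ENNReal.ofReal (2 * ‖z‖ ^ 2)) z := by
    rw [indicator_apply]
    split_ifs with hz
    · exact le_add_self
    · rw [add_zero]
      have : ‖z‖ < R := not_le.1 hz
      exact ENNReal.ofReal_le_ofReal (by nlinarith [norm_nonneg z])
  calc ENNReal.ofReal (‖x - y‖ ^ 2)
      ≤ ENNReal.ofReal (2 * ‖x‖ ^ 2) + ENNReal.ofReal (2 * ‖y‖ ^ 2) := by
        rw [← ENNReal.ofReal_add (by positivity) (by positivity)]
        exact ENNReal.ofReal_le_ofReal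
          (by nlinarith [norm_sub_le x y, norm_nonneg (x - y), sq_nonneg (‖x‖ - ‖y‖)])
    _ ≤ _ := add_le_add (hsplit x) (hsplit y)
    _ = _ := by
        rw [add_add_add_comm, ← ENNReal.ofReal_add (by positivity) (by positivity), ← add_assoc]
        ring_nf

theorem stmt2 (d : ℕ) (μ ν : Measure (EuclideanSpace ℝ (Fin d)))
    [IsProbabilityMeasure μ] [IsProbabilityMeasure ν]
    (C : ℝ) (hC : 0 < C)
    (htailμ : ∀ z : ℝ, C ≤ z → (μ {x | z ≤ ‖x‖}).toReal ≤ Real.exp (-z / C + 1))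
    (htailν : ∀ z : ℝ, C ≤ z → (ν {x | z ≤ ‖x‖}).toReal ≤ Real.exp (-z / C + 1))
    (R : ℝ) (hR : C ≤ R) :
    W2sq μ ν ≤ 4 * R ^ 2 * tvDist μ ν
      + 8 * (R ^ 2 + R * C + C ^ 2) * Real.exp (-R / C + 1) := by
  have hmoment (ρ : Measure (EuclideanSpace ℝ (Fin d))) [IsFiniteMeasure ρ]
      (htail : ∀ z : ℝ, C ≤ z → (ρ {x | z ≤ ‖x‖}).toReal ≤ Real.exp (-z / C + 1)) :=
    lintegral_indicator_two_mul_sq_le_of_tail_le_exp ρ measurable_norm hC hR fun z hz =>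
      (ENNReal.le_ofReal_iff_toReal_le (measure_ne_top _ _) (Real.exp_nonneg _)).2 (htail z hz)
  obtain ⟨γ, hγμ, hγν, hγ⟩ := exists_coupling_lintegral_le μ ν
    (c := fun p => ENNReal.ofReal (‖p.1 - p.2‖ ^ 2))
    ((by fun_prop : Measurable fun x : EuclideanSpace ℝ (Fin d) =>
      ENNReal.ofReal (2 * ‖x‖ ^ 2)).indicator (measurableSet_le measurable_const measurable_norm))
    (by simp) (ofReal_norm_sub_sq_le R)
  have hR0 : 0 < R := hC.trans_le hR
  have htv := tvDist_nonneg μ ν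
  refine W2sq_le_of_lintegral_le hγμ hγν (by positivity) (hγ.trans ?_)
  calc _ ≤ ENNReal.ofReal (4 * R ^ 2) * ENNReal.ofReal (tvDist μ ν)
        + ENNReal.ofReal (4 * (R ^ 2 + R * C + C ^ 2) * Real.exp (-R / C + 1))
        + ENNReal.ofReal (4 * (R ^ 2 + R * C + C ^ 2) * Real.exp (-R / C + 1)) := by
        gcongr
        exacts [hmoment μ htailμ, hmoment ν htailν]
    _ = _ := by
        rw [← ENNReal.ofReal_mul (by positivity), ← ENNReal.ofReal_add (by positivity)
          (by positivity), ← ENNReal.ofReal_add (by positivity) (by positivity)]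
        ring_nf
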